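/- arXiv:math-ph/0701031 — 3 statements merged into one kernel-verified Lean document; each statement's English description precedes it below -/
import Mathlib

section
/- Let H be a complex separable Hilbert space, let M be a POV measure on a measurable space (X, 𝒜), let P be a PV measure on a measurable space (Y, ℬ), and let ν be a weak Markov kernel with respect to M such that P = ν∘M. Then ℛ(P) ⊆ ℛ(M), i.e. for every B ∈ ℬ there exists A ∈ 𝒜 with P(B) = M(A). -/
open MeasureTheory ComplexOrder
open scoped Classical

noncomputable section

variable {H : Type*} [NormedAddCommGroup H] [InnerProductSpace ℂ H] [CompleteSpace H]

/-- A (normalized) positive operator valued measure on the measurable space `X`: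
`0 ≤ M A ≤ 1`, `M ∅ = 0`, `M univ = 1`, and `M` is weakly σ-additive. -/
structure IsPOVM {X : Type*} [MeasurableSpace X] (M : Set X → (H →L[ℂ] H)) : Prop where
  pos : ∀ A : Set X, MeasurableSet A → (M A).IsPositive
  le_one : ∀ A : Set X, MeasurableSet A → ((1 : H →L[ℂ] H) - M A).IsPositive
  empty : M ∅ = 0
  univ : M Set.univ = 1
  m_iUnion : ∀ (ψ : H) (A : ℕ → Set X), (∀ n, MeasurableSet (A n)) →
    Pairwise (Function.onFun Disjoint A) →
    HasSum (fun n => (inner ℂ ψ (M (A n) ψ) : ℂ)) (inner ℂ ψ (M (⋃ n, A n) ψ))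

/-- A projection valued (PV) measure: a POV measure whose values are orthogonal
projections (self-adjointness is part of positivity). -/
def IsPVM {X : Type*} [MeasurableSpace X] (M : Set X → (H →L[ℂ] H)) : Prop :=
  IsPOVM M ∧ ∀ A : Set X, MeasurableSet A → M A * M A = M A

/-- The finite measure `μ_ψ^M (A) = ⟨ψ, M(A) ψ⟩` associated to a POV measure `M`
and a vector `ψ`. (Junk value `0` if `M` is not a POV measure.) -/
def vecMeasure {X : Type*} [MeasurableSpace X] (M : Set X → (H →L[ℂ] H)) (ψ : H) :
    Measure X :=
  if hM : IsPOVM M then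
    Measure.ofMeasurable (fun A _ => ENNReal.ofReal (inner ℂ ψ (M A ψ) : ℂ).re)
      (by simp [hM.empty])
      (by
        intro A hA hd
        have h := hM.m_iUnion ψ A hA hd
        have hre : HasSum (fun n => ((inner ℂ ψ (M (A n) ψ) : ℂ)).re)
            ((inner ℂ ψ (M (⋃ n, A n) ψ) : ℂ)).re := h.mapL Complex.reCLM
        have hnn : ∀ n, 0 ≤ ((inner ℂ ψ (M (A n) ψ) : ℂ)).re := by
          intro n
          have h2 := (hM.pos (A n) (hA n)).2 ψ
          rw [ContinuousLinearMap.reApplyInnerSelf] at h2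
          simpa [inner_re_symm] using h2
        try dsimp only
        rw [← hre.tsum_eq]
        exact ENNReal.ofReal_tsum_of_nonneg hnn hre.summable)
  else 0

/-- `ν : X × ℬ → ℝ` is a weak Markov kernel with respect to the POV measure `M`. -/
def IsWeakMarkovKernel {X Y : Type*} [MeasurableSpace X] [MeasurableSpace Y]
    (M : Set X → (H →L[ℂ] H)) (ν : X → Set Y → ℝ) : Prop :=
  (∀ B : Set Y, MeasurableSet B → Measurable fun x => ν x B) ∧
  ∀ ψ : H,
    (∀ B : Set Y, MeasurableSet B →
      ∀ᵐ x ∂(vecMeasure M ψ), 0 ≤ ν x B ∧ ν x B ≤ 1) ∧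
    (∀ᵐ x ∂(vecMeasure M ψ), ν x Set.univ = 1) ∧
    (∀ᵐ x ∂(vecMeasure M ψ), ν x ∅ = 0) ∧
    (∀ B : ℕ → Set Y, (∀ n, MeasurableSet (B n)) → Pairwise (Function.onFun Disjoint B) →
      ∀ᵐ x ∂(vecMeasure M ψ), HasSum (fun n => ν x (B n)) (ν x (⋃ n, B n)))

/-- `F = ν ∘ M` : the POV measure `F` is the smearing of `M` with respect to `ν`. -/
def IsSmearing {X Y : Type*} [MeasurableSpace X] [MeasurableSpace Y]
    (M : Set X → (H →L[ℂ] H)) (ν : X → Set Y → ℝ) (F : Set Y → (H →L[ℂ] H)) : Prop :=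
  ∀ B : Set Y, MeasurableSet B → ∀ ψ : H,
    (inner ℂ ψ (F B ψ) : ℂ) = ((∫ x, ν x B ∂(vecMeasure M ψ) : ℝ) : ℂ)

/-- A weak Markov kernel has values in `{0,1}`. -/
def HasZeroOneValues {X Y : Type*} [MeasurableSpace X] [MeasurableSpace Y]
    (M : Set X → (H →L[ℂ] H)) (ν : X → Set Y → ℝ) : Prop :=
  ∀ B : Set Y, MeasurableSet B → ∀ ψ : H,
    ∀ᵐ x ∂(vecMeasure M ψ), ν x B = 0 ∨ ν x B = 1


/-
For a vector `ψ`, write `φ = P(B) ψ` and `χ = ψ - φ`. Since `P(B)` is a projection,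
`∫ ν(·, B) dμ_φ = ‖φ‖² = μ_φ(X)` and `∫ ν(·, B) dμ_χ = 0`; as `0 ≤ ν(·, B) ≤ 1`, this forces
`ν(·, B) = 1` μ_φ-a.e. and `ν(·, B) = 0` μ_χ-a.e. Positivity of `M` gives
`μ_ψ ≪ μ_φ + μ_χ`, so `ν(·, B)` is μ_ψ-a.e. the indicator of `A = {x | ν(x, B) = 1}` and
`⟨ψ, P(B) ψ⟩ = μ_ψ(A) = ⟨ψ, M(A) ψ⟩`. Polarization then yields `P(B) = M(A)`.
-/

open scoped InnerProductSpace

section InnerProduct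

variable {𝕜 E : Type*} [RCLike 𝕜] [NormedAddCommGroup E] [InnerProductSpace 𝕜 E]

theorem ContinuousLinearMap.IsPositive.re_inner_add_le {T : E →L[𝕜] E} (hT : T.IsPositive)
    (x y : E) :
    RCLike.re ⟪x + y, T (x + y)⟫_𝕜 ≤ 2 * (RCLike.re ⟪x, T x⟫_𝕜 + RCLike.re ⟪y, T y⟫_𝕜) := by
  have h := hT.re_inner_nonneg_right (x - y)
  simp only [map_add, map_sub, inner_add_left, inner_add_right, inner_sub_left,
    inner_sub_right] at h ⊢
  linarith

theorem ContinuousLinearMap.ext_of_inner_apply_self {V : Type*} [NormedAddCommGroup V]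
    [InnerProductSpace ℂ V] {S T : V →L[ℂ] V}
    (h : ∀ x, ⟪x, S x⟫_ℂ = ⟪x, T x⟫_ℂ) : S = T := by
  refine ContinuousLinearMap.coe_injective ((ext_inner_map _ _).mp fun x => ?_)
  rw [← inner_conj_symm, ContinuousLinearMap.coe_coe, h, inner_conj_symm,
    ContinuousLinearMap.coe_coe]

end InnerProduct

namespace MeasureTheory

theorem ae_eq_one_of_integral_eq_measureReal_univ {α : Type*} [MeasurableSpace α]
    {μ : Measure α} [IsFiniteMeasure μ] {f : α → ℝ} (hfi : Integrable f μ) (hf : f ≤ᵐ[μ] 1)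
    (h : ∫ x, f x ∂μ = μ.real Set.univ) : f =ᵐ[μ] 1 := by
  refine (integral_eq_iff_of_ae_le hfi (integrable_const 1) hf).mp ?_
  simpa using h

end MeasureTheory

instance isFiniteMeasure_vecMeasure {X : Type*} [MeasurableSpace X]
    {E : Type*} [NormedAddCommGroup E] [InnerProductSpace ℂ E]
    (M : Set X → (E →L[ℂ] E)) (ψ : E) : IsFiniteMeasure (vecMeasure M ψ) := by
  rw [vecMeasure]
  split_ifs
  · exact ⟨by rw [Measure.ofMeasurable_apply _ .univ]; exact ENNReal.ofReal_lt_top⟩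
  · infer_instance

namespace IsPOVM

variable {E X : Type*} [NormedAddCommGroup E] [InnerProductSpace ℂ E] [MeasurableSpace X]
  {M : Set X → (E →L[ℂ] E)}

theorem re_inner_nonneg (hM : IsPOVM M) (ψ : E) {A : Set X} (hA : MeasurableSet A) :
    0 ≤ (⟪ψ, M A ψ⟫_ℂ).re :=
  (hM.pos A hA).re_inner_nonneg_right ψ

theorem vecMeasure_apply (hM : IsPOVM M) (ψ : E) {A : Set X} (hA : MeasurableSet A) :
    vecMeasure M ψ A = ENNReal.ofReal (⟪ψ, M A ψ⟫_ℂ).re := by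
  rw [vecMeasure, dif_pos hM, Measure.ofMeasurable_apply A hA]

theorem vecMeasure_real_apply (hM : IsPOVM M) (ψ : E) {A : Set X} (hA : MeasurableSet A) :
    (vecMeasure M ψ).real A = (⟪ψ, M A ψ⟫_ℂ).re := by
  rw [measureReal_def, hM.vecMeasure_apply ψ hA, ENNReal.toReal_ofReal (hM.re_inner_nonneg ψ hA)]

theorem vecMeasure_eq_zero_iff (hM : IsPOVM M) (ψ : E) {A : Set X} (hA : MeasurableSet A) :
    vecMeasure M ψ A = 0 ↔ (⟪ψ, M A ψ⟫_ℂ).re = 0 := by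
  rw [hM.vecMeasure_apply ψ hA, ENNReal.ofReal_eq_zero, (hM.re_inner_nonneg ψ hA).ge_iff_eq']

theorem vecMeasure_add_absolutelyContinuous (hM : IsPOVM M) (φ χ : E) :
    vecMeasure M (φ + χ) ≪ vecMeasure M φ + vecMeasure M χ := by
  refine Measure.AbsolutelyContinuous.mk fun A hA hA0 => ?_
  rw [Measure.add_apply, add_eq_zero, hM.vecMeasure_eq_zero_iff φ hA,
    hM.vecMeasure_eq_zero_iff χ hA] at hA0
  have hle := (hM.pos A hA).re_inner_add_le φ χ
  simp only [RCLike.re_to_complex, hA0.1, hA0.2, add_zero, mul_zero] at hle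
  exact (hM.vecMeasure_eq_zero_iff _ hA).mpr (le_antisymm hle (hM.re_inner_nonneg _ hA))

end IsPOVM

section Smearing

variable {E X Y : Type*} [NormedAddCommGroup E] [InnerProductSpace ℂ E] [MeasurableSpace X]
  [MeasurableSpace Y] {M : Set X → (E →L[ℂ] E)} {ν : X → Set Y → ℝ} {F : Set Y → (E →L[ℂ] E)}
  {B : Set Y}

theorem IsWeakMarkovKernel.integrable (hν : IsWeakMarkovKernel M ν) (hB : MeasurableSet B)
    (ψ : E) : Integrable (fun x => ν x B) (vecMeasure M ψ) := by
  refine .of_bound (hν.1 B hB).aestronglyMeasurable 1 ?_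
  filter_upwards [(hν.2 ψ).1 B hB] with x hx
  rw [Real.norm_eq_abs, abs_le]
  exact ⟨by linarith [hx.1], hx.2⟩

namespace IsSmearing

theorem integral_eq (hs : IsSmearing M ν F) (hB : MeasurableSet B) (ψ : E) :
    ∫ x, ν x B ∂(vecMeasure M ψ) = (⟪ψ, F B ψ⟫_ℂ).re := by
  rw [hs B hB ψ, Complex.ofReal_re]

theorem ae_eq_one_of_apply_eq_self (hM : IsPOVM M) (hν : IsWeakMarkovKernel M ν)
    (hs : IsSmearing M ν F) (hB : MeasurableSet B) {φ : E} (hφ : F B φ = φ) :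
    ∀ᵐ x ∂(vecMeasure M φ), ν x B = 1 := by
  refine ae_eq_one_of_integral_eq_measureReal_univ (hν.integrable hB φ) ?_ ?_
  · filter_upwards [(hν.2 φ).1 B hB] with x hx using hx.2
  · rw [hs.integral_eq hB, hφ, hM.vecMeasure_real_apply φ .univ, hM.univ,
      one_apply_eq_self]

theorem ae_eq_zero_of_apply_eq_zero (hν : IsWeakMarkovKernel M ν) (hs : IsSmearing M ν F)
    (hB : MeasurableSet B) {χ : E} (hχ : F B χ = 0) :
    ∀ᵐ x ∂(vecMeasure M χ), ν x B = 0 := by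
  have hnonneg : 0 ≤ᵐ[vecMeasure M χ] fun x => ν x B := by
    filter_upwards [(hν.2 χ).1 B hB] with x hx using hx.1
  refine (integral_eq_zero_iff_of_nonneg_ae hnonneg (hν.integrable hB χ)).mp ?_
  rw [hs.integral_eq hB, hχ, inner_zero_right, Complex.zero_re]

theorem hasZeroOneValues_of_isPVM (hM : IsPOVM M) (hF : IsPVM F)
    (hν : IsWeakMarkovKernel M ν) (hs : IsSmearing M ν F) : HasZeroOneValues M ν := by
  intro B hB ψ
  have hφ : F B (F B ψ) = F B ψ := congr($(hF.2 B hB) ψ)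
  have hχ : F B (ψ - F B ψ) = 0 := by rw [map_sub, hφ, sub_self]
  have hψ : ψ = F B ψ + (ψ - F B ψ) := (add_sub_cancel _ _).symm
  have hsum : ∀ᵐ x ∂(vecMeasure M (F B ψ) + vecMeasure M (ψ - F B ψ)),
      ν x B = 0 ∨ ν x B = 1 := by
    rw [ae_add_measure_iff]
    exact ⟨(hs.ae_eq_one_of_apply_eq_self hM hν hB hφ).mono fun x hx => .inr hx,
      (hs.ae_eq_zero_of_apply_eq_zero hν hB hχ).mono fun x hx => .inl hx⟩
  rw [hψ]
  exact (hM.vecMeasure_add_absolutelyContinuous _ _).ae_le hsum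

theorem inner_apply_eq_inner_setOf_eq_one (hM : IsPOVM M) (hν : IsWeakMarkovKernel M ν)
    (hs : IsSmearing M ν F) (h01 : HasZeroOneValues M ν) (hB : MeasurableSet B) (ψ : E) :
    ⟪ψ, F B ψ⟫_ℂ = ⟪ψ, M {x | ν x B = 1} ψ⟫_ℂ := by
  have hA : MeasurableSet {x | ν x B = 1} := hν.1 B hB (measurableSet_singleton 1)
  have hind : (fun x => ν x B) =ᵐ[vecMeasure M ψ] {x | ν x B = 1}.indicator 1 := by
    filter_upwards [h01 B hB ψ] with x hx
    rcases hx with hx | hx <;> simp [hx]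
  rw [hs B hB ψ, integral_congr_ae hind, integral_indicator_one hA,
    hM.vecMeasure_real_apply ψ hA]
  exact (hM.pos _ hA).isSymmetric.coe_re_inner_self_apply ψ

end IsSmearing

end Smearing

theorem range_pv_subset_range_povm_of_smearing_general
    {X Y : Type*} [MeasurableSpace X] [MeasurableSpace Y]
    (M : Set X → (H →L[ℂ] H)) (hM : IsPOVM M)
    (P : Set Y → (H →L[ℂ] H)) (hP : IsPVM P)
    (ν : X → Set Y → ℝ) (hν : IsWeakMarkovKernel M ν) (hs : IsSmearing M ν P) :
    ∀ B : Set Y, MeasurableSet B → ∃ A : Set X, MeasurableSet A ∧ P B = M A := by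
  intro B hB
  have h01 : HasZeroOneValues M ν := hs.hasZeroOneValues_of_isPVM hM hP hν
  exact ⟨{x | ν x B = 1}, hν.1 B hB (measurableSet_singleton 1),
    ContinuousLinearMap.ext_of_inner_apply_self (hs.inner_apply_eq_inner_setOf_eq_one hM hν h01 hB)⟩

/-- If a PV measure `P` is a smearing of a POV measure `M` with
respect to a weak Markov kernel, then `ℛ(P) ⊆ ℛ(M)`. -/
theorem range_pv_subset_range_povm_of_smearing
    [TopologicalSpace.SeparableSpace H]
    {X Y : Type*} [MeasurableSpace X] [MeasurableSpace Y]
    (M : Set X → (H →L[ℂ] H)) (hM : IsPOVM M)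
    (P : Set Y → (H →L[ℂ] H)) (hP : IsPVM P)
    (ν : X → Set Y → ℝ) (hν : IsWeakMarkovKernel M ν) (hs : IsSmearing M ν P) :
    ∀ B : Set Y, MeasurableSet B → ∃ A : Set X, MeasurableSet A ∧ P B = M A :=
  range_pv_subset_range_povm_of_smearing_general M hM P hP ν hν hs

end
end

section
/- Let H be a complex separable Hilbert space, let M be a POV measure on (Y, ℬ), and let ν : Y × 𝒜 → ℝ be a weak Markov kernel with respect to M taking sets from a measurable space (X, 𝒜). Fix B₁ ∈ 𝒜 and define ν±(y, B) := ν(y, B) ± [ν(y, B₁)·ν(y, B ∩ B₁ᶜ) − ν(y, B₁ᶜ)·ν(y, B ∩ B₁)] for y ∈ Y and B ∈ 𝒜. Then ν⁺ and ν⁻ are weak Markov kernels with respect to M, and ν(y, B) = ½ν⁺(y, B) + ½ν⁻(y, B) for all y and B. -/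
open MeasureTheory ComplexOrder
open scoped Classical

/-!
With `p = ν(B₁)`, `q = ν(B₁ᶜ) = 1 - p`, `a = ν(B ∩ B₁) ≤ p` and `b = ν(B ∩ B₁ᶜ) ≤ q`, the
perturbed value `a + b + s (p b - q a)` is affine in `s`. At `s = 1` it is
`a p + b (1 + p) ≤ p² + q (1 + p) = 1`, at `s = -1` it is `a (1 + q) + b q ≤ p (1 + q) + q² = 1`,
so it stays in `[0, 1]` for `|s| ≤ 1`. σ-additivity survives because `p` and `q` do not depend
on `B`, while `B ↦ B ∩ B₁` and `B ↦ B ∩ B₁ᶜ` preserve disjoint unions.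
-/

section

variable {H : Type*} [NormedAddCommGroup H] [InnerProductSpace ℂ H]
  {X Y : Type*} [MeasurableSpace X] [MeasurableSpace Y]
  {M : Set Y → (H →L[ℂ] H)} {ν : Y → Set X → ℝ}

namespace IsWeakMarkovKernel

theorem ae_union (hν : IsWeakMarkovKernel M ν) (ψ : H) {A A' : Set X}
    (hA : MeasurableSet A) (hA' : MeasurableSet A') (hd : Disjoint A A') :
    ∀ᵐ y ∂(vecMeasure M ψ), ν y (A ∪ A') = ν y A + ν y A' := by
  let s : ℕ → Set X := fun n => if n = 0 then A else if n = 1 then A' else ∅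
  have hs : ∀ n, MeasurableSet (s n) := by
    intro n; dsimp only [s]; split_ifs <;> simp [hA, hA']
  have hsd : Pairwise (Function.onFun Disjoint s) := by
    intro i j hij
    rcases i with _ | _ | i <;> rcases j with _ | _ | j <;>
      simp_all [s, Function.onFun, hd.symm]
  have hsU : ⋃ n, s n = A ∪ A' := by
    ext x
    simp only [Set.mem_iUnion, Set.mem_union, s]
    constructor
    · rintro ⟨n, hn⟩
      split_ifs at hn <;> simp_all
    · rintro (h | h)
      exacts [⟨0, by simpa⟩, ⟨1, by simpa⟩]
  obtain ⟨-, -, hempty, hsum⟩ := hν.2 ψ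
  filter_upwards [hsum s hs hsd, hempty] with y hy hy₀
  rw [hsU] at hy
  have hfin : HasSum (fun n => ν y (s n)) (∑ n ∈ Finset.range 2, ν y (s n)) :=
    hasSum_sum_of_ne_finset_zero fun n hn => by
      simp only [Finset.mem_range, not_lt] at hn
      simp [s, show n ≠ 0 by omega, show n ≠ 1 by omega, hy₀]
  simpa [Finset.sum_range_succ, s] using hy.unique hfin

theorem ae_add_compl (hν : IsWeakMarkovKernel M ν) (ψ : H) {A : Set X}
    (hA : MeasurableSet A) : ∀ᵐ y ∂(vecMeasure M ψ), ν y A + ν y Aᶜ = 1 := by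
  filter_upwards [hν.ae_union ψ hA hA.compl disjoint_compl_right, (hν.2 ψ).2.1] with y h huniv
  rw [← h, Set.union_compl_self, huniv]

theorem ae_le_of_subset (hν : IsWeakMarkovKernel M ν) (ψ : H) {A A' : Set X}
    (hA : MeasurableSet A) (hA' : MeasurableSet A') (hAA' : A ⊆ A') :
    ∀ᵐ y ∂(vecMeasure M ψ), ν y A ≤ ν y A' := by
  filter_upwards [hν.ae_union ψ hA (hA'.diff hA) Set.disjoint_sdiff_right,
    (hν.2 ψ).1 _ (hA'.diff hA)] with y h hdiff
  rw [Set.union_sdiff_cancel hAA'] at h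
  linarith [hdiff.1]

end IsWeakMarkovKernel

theorem perturbation_mem_Icc {p q a b s : ℝ} (hpq : p + q = 1) (ha : 0 ≤ a) (hap : a ≤ p)
    (hb : 0 ≤ b) (hbq : b ≤ q) (hs : |s| ≤ 1) :
    a + b + s * (p * b - q * a) ∈ Set.Icc 0 1 := by
  obtain ⟨hs₁, hs₂⟩ := abs_le.mp hs
  constructor <;> nlinarith [mul_nonneg (sub_nonneg.2 hs₂) ha, mul_nonneg (sub_nonneg.2 hs₂) hb,
    mul_nonneg (neg_le_iff_add_nonneg.1 hs₁) ha, mul_nonneg (neg_le_iff_add_nonneg.1 hs₁) hb,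
    mul_nonneg (sub_nonneg.2 hap) (sub_nonneg.2 hbq)]

def perturbKernel (ν : Y → Set X → ℝ) (B₁ : Set X) (s : ℝ) (y : Y) (B : Set X) : ℝ :=
  ν y B + s * (ν y B₁ * ν y (B ∩ B₁ᶜ) - ν y B₁ᶜ * ν y (B ∩ B₁))

namespace IsWeakMarkovKernel

variable {B₁ : Set X} {s : ℝ}

theorem measurable_perturbKernel (hν : IsWeakMarkovKernel M ν) (hB₁ : MeasurableSet B₁)
    {B : Set X} (hB : MeasurableSet B) : Measurable fun y => perturbKernel ν B₁ s y B :=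
  (hν.1 B hB).add <| measurable_const.mul <|
    ((hν.1 B₁ hB₁).mul (hν.1 _ (hB.inter hB₁.compl))).sub
      ((hν.1 B₁ᶜ hB₁.compl).mul (hν.1 _ (hB.inter hB₁)))

theorem ae_perturbKernel_mem_Icc (hν : IsWeakMarkovKernel M ν) (hB₁ : MeasurableSet B₁)
    (hs : |s| ≤ 1) (ψ : H) {B : Set X} (hB : MeasurableSet B) :
    ∀ᵐ y ∂(vecMeasure M ψ), perturbKernel ν B₁ s y B ∈ Set.Icc 0 1 := by
  have hBin := hB.inter hB₁
  have hBout := hB.inter hB₁.compl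
  have hsplit := hν.ae_union ψ hBin hBout
    (disjoint_compl_right.mono Set.inter_subset_right Set.inter_subset_right)
  filter_upwards [hsplit, hν.ae_add_compl ψ hB₁,
    hν.ae_le_of_subset ψ hBin hB₁ Set.inter_subset_right,
    hν.ae_le_of_subset ψ hBout hB₁.compl Set.inter_subset_right,
    (hν.2 ψ).1 _ hBin, (hν.2 ψ).1 _ hBout] with y hsplit hpq hap hbq ha hb
  rw [Set.inter_union_compl] at hsplit
  rw [perturbKernel, hsplit]
  exact perturbation_mem_Icc hpq ha.1 hap hb.1 hbq hs

theorem perturbKernel (hν : IsWeakMarkovKernel M ν) (hB₁ : MeasurableSet B₁)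
    (hs : |s| ≤ 1) : IsWeakMarkovKernel M (perturbKernel ν B₁ s) := by
  refine ⟨fun B hB => hν.measurable_perturbKernel hB₁ hB, fun ψ => ?_⟩
  obtain ⟨-, huniv, hempty, hsum⟩ := hν.2 ψ
  refine ⟨fun B hB => hν.ae_perturbKernel_mem_Icc hB₁ hs ψ hB, ?_, ?_, ?_⟩
  · filter_upwards [huniv] with y h
    simp [_root_.perturbKernel, h, mul_comm]
  · filter_upwards [hempty] with y h
    simp [_root_.perturbKernel, h]
  · intro B hB hd
    have hdisj (C : Set X) : Pairwise (Function.onFun Disjoint fun n => B n ∩ C) :=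
      fun i j hij => (hd hij).mono Set.inter_subset_left Set.inter_subset_left
    filter_upwards [hsum B hB hd, hsum _ (fun n => (hB n).inter hB₁) (hdisj B₁),
      hsum _ (fun n => (hB n).inter hB₁.compl) (hdisj B₁ᶜ)] with y h hin hout
    rw [← Set.iUnion_inter] at hin hout
    exact h.add (((hout.mul_left (ν y B₁)).sub (hin.mul_left (ν y B₁ᶜ))).mul_left s)

end IsWeakMarkovKernel

end

section

variable {H : Type*} [NormedAddCommGroup H] [InnerProductSpace ℂ H] [CompleteSpace H]

theorem perturbed_weak_markov_kernels_general
    {X Y : Type*} [MeasurableSpace X] [MeasurableSpace Y]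
    (M : Set Y → (H →L[ℂ] H))
    (ν : Y → Set X → ℝ) (hν : IsWeakMarkovKernel M ν)
    (B₁ : Set X) (hB₁ : MeasurableSet B₁)
    (νp νm : Y → Set X → ℝ)
    (hp : ∀ (y : Y) (B : Set X),
      νp y B = ν y B + (ν y B₁ * ν y (B ∩ B₁ᶜ) - ν y B₁ᶜ * ν y (B ∩ B₁)))
    (hm : ∀ (y : Y) (B : Set X),
      νm y B = ν y B - (ν y B₁ * ν y (B ∩ B₁ᶜ) - ν y B₁ᶜ * ν y (B ∩ B₁))) :
    IsWeakMarkovKernel M νp ∧ IsWeakMarkovKernel M νm ∧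
      ∀ (y : Y) (B : Set X), ν y B = (1 / 2) * νp y B + (1 / 2) * νm y B := by
  have hνp : νp = perturbKernel ν B₁ 1 := by
    ext y B
    rw [hp, perturbKernel, one_mul]
  have hνm : νm = perturbKernel ν B₁ (-1) := by
    ext y B
    rw [hm, perturbKernel, neg_one_mul, sub_eq_add_neg]
  refine ⟨hνp ▸ hν.perturbKernel hB₁ (by norm_num),
    hνm ▸ hν.perturbKernel hB₁ (by norm_num), fun y B => ?_⟩
  rw [hp, hm]
  ring

/-- The perturbed kernels `ν±` are weak Markov kernels with respect
to `M`, and `ν` is their half-sum. -/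
theorem perturbed_weak_markov_kernels
    [TopologicalSpace.SeparableSpace H]
    {X Y : Type*} [MeasurableSpace X] [MeasurableSpace Y]
    (M : Set Y → (H →L[ℂ] H)) (hM : IsPOVM M)
    (ν : Y → Set X → ℝ) (hν : IsWeakMarkovKernel M ν)
    (B₁ : Set X) (hB₁ : MeasurableSet B₁)
    (νp νm : Y → Set X → ℝ)
    (hp : ∀ (y : Y) (B : Set X),
      νp y B = ν y B + (ν y B₁ * ν y (B ∩ B₁ᶜ) - ν y B₁ᶜ * ν y (B ∩ B₁)))
    (hm : ∀ (y : Y) (B : Set X),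
      νm y B = ν y B - (ν y B₁ * ν y (B ∩ B₁ᶜ) - ν y B₁ᶜ * ν y (B ∩ B₁))) :
    IsWeakMarkovKernel M νp ∧ IsWeakMarkovKernel M νm ∧
      ∀ (y : Y) (B : Set X), ν y B = (1 / 2) * νp y B + (1 / 2) * νm y B :=
  perturbed_weak_markov_kernels_general M ν hν B₁ hB₁ νp νm hp hm

end
end

section
/- Let M be a POV measure on a measurable space (X, 𝒜) with values in effects on a complex Hilbert space H. If for some A ∈ 𝒜 the operator M(A) is an orthogonal projection, then M(A) commutes with all elements of the range of M: M(A)M(B) = M(B)M(A) for every B ∈ 𝒜. -/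
open MeasureTheory ComplexOrder
open scoped Classical

noncomputable section

variable {H : Type*} [NormedAddCommGroup H] [InnerProductSpace ℂ H] [CompleteSpace H]

/-! Write `P = M A`. For measurable `B`, `M (B ∩ A) ≤ M A` and `M (B \ A) ≤ M Aᶜ = 1 - P`. In a
C⋆-algebra a positive element `a` below a projection `e` satisfies `a e = e a = a`; applied to `P`
and to the projection `1 - P`, both pieces of `M B = M (B ∩ A) + M (B \ A)` commute with `P`. -/

lemma IsStarProjection.commute_of_nonneg_of_le {A : Type*} [CStarAlgebra A] [PartialOrder A]
    [StarOrderedRing A] {a e : A} (he : IsStarProjection e) (ha : 0 ≤ a) (hae : a ≤ e) :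
    Commute e a := by
  obtain ⟨hae, hea⟩ := he.mul_right_and_mul_left_of_nonneg_of_le ha hae
  exact hea.trans hae.symm

section

variable {E : Type*} [NormedAddCommGroup E] [InnerProductSpace ℂ E]

theorem ContinuousLinearMap.ext_inner_self_apply {S T : E →L[ℂ] E}
    (h : ∀ x, inner ℂ x (S x) = inner ℂ x (T x)) : S = T := by
  refine coe_injective ((ext_inner_map _ _).mp fun x => ?_)
  rw [← inner_conj_symm, coe_coe, h, inner_conj_symm, coe_coe]

namespace IsPOVM

variable {X : Type*} [MeasurableSpace X] {M : Set X → (E →L[ℂ] E)}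

def innerMeasure (hM : IsPOVM M) (ψ : E) : ComplexMeasure X where
  measureOf' A := if MeasurableSet A then inner ℂ ψ (M A ψ) else 0
  empty' := by simp [hM.empty]
  not_measurable' A hA := if_neg hA
  m_iUnion' A hA hd := by
    simpa only [hA, MeasurableSet.iUnion hA, if_true] using hM.m_iUnion ψ A hA hd

lemma union (hM : IsPOVM M) {S T : Set X} (hS : MeasurableSet S) (hT : MeasurableSet T)
    (hd : Disjoint S T) : M (S ∪ T) = M S + M T := by
  refine ContinuousLinearMap.ext_inner_self_apply fun ψ => ?_
  have h := (hM.innerMeasure ψ).of_union hd hS hT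
  simpa [innerMeasure, hS, hT, hS.union hT, inner_add_right] using h

lemma compl (hM : IsPOVM M) {S : Set X} (hS : MeasurableSet S) : M Sᶜ = 1 - M S := by
  rw [eq_sub_iff_add_eq', ← hM.univ, ← hM.union hS hS.compl disjoint_compl_right,
    Set.union_compl_self]

lemma nonneg (hM : IsPOVM M) {S : Set X} (hS : MeasurableSet S) : 0 ≤ M S :=
  (ContinuousLinearMap.nonneg_iff_isPositive _).mpr (hM.pos S hS)

lemma mono (hM : IsPOVM M) {S T : Set X} (hS : MeasurableSet S) (hT : MeasurableSet T)
    (hST : S ⊆ T) : M S ≤ M T := by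
  rw [ContinuousLinearMap.le_def, ← Set.union_sdiff_cancel hST,
    hM.union hS (hT.diff hS) Set.disjoint_sdiff_right, add_sub_cancel_left]
  exact hM.pos _ (hT.diff hS)

end IsPOVM

end

lemma IsPOVM.commute_of_subset_of_isStarProjection {X : Type*} [MeasurableSpace X]
    {M : Set X → (H →L[ℂ] H)} (hM : IsPOVM M) {S T : Set X} (hS : MeasurableSet S)
    (hT : MeasurableSet T) (hTS : T ⊆ S) (hP : IsStarProjection (M S)) :
    Commute (M S) (M T) :=
  hP.commute_of_nonneg_of_le (hM.nonneg hT) (hM.mono hT hS hTS)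

/-- A projection in the range of a POV measure commutes with every
element of the range. -/
theorem projection_in_range_commutes
    {X : Type*} [MeasurableSpace X]
    (M : Set X → (H →L[ℂ] H)) (hM : IsPOVM M)
    (A : Set X) (hA : MeasurableSet A) (hproj : M A * M A = M A) :
    ∀ B : Set X, MeasurableSet B → M A * M B = M B * M A := by
  intro B hB
  have hP : IsStarProjection (M A) := ⟨hproj, (hM.pos A hA).isSelfAdjoint⟩
  have hPc : IsStarProjection (M Aᶜ) := hM.compl hA ▸ hP.one_sub
  have hin : Commute (M A) (M (B ∩ A)) :=
    hM.commute_of_subset_of_isStarProjection hA (hB.inter hA) Set.inter_subset_right hP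
  have hout : Commute (M A) (M (B \ A)) := by
    have h := hM.commute_of_subset_of_isStarProjection hA.compl (hB.diff hA)
      (Set.sdiff_subset_compl B A) hPc
    simpa only [hM.compl hA, sub_sub_cancel] using (Commute.one_left _).sub_left h
  rw [← Set.inter_union_sdiff B A,
    hM.union (hB.inter hA) (hB.diff hA) Set.disjoint_sdiff_inter.symm]
  exact (hin.add_right hout).eq

end
end
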